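/- Let G be a local group and N a compact subgroup of G with normalizing neighborhood V. Then there is a symmetric open neighborhood U of 1 in G such that N ⊆ U ⊆ V and N is a normal subgroup of the restriction G|U. -/

import Mathlib

open scoped Topology

universe u v

section LocalGroupBasics

variable {G : Type u} {G' : Type v}

/-- A subset `X` of `G` is *symmetric* if `X = X⁻¹`, i.e. membership in `X` is
invariant under the inversion map. -/
def IsSymmetricSet (inv : G → G) (X : Set G) : Prop := ∀ x, x ∈ X ↔ inv x ∈ X

/-- The data `(one, inv, dom, mul)` on a topological space `G` is a *local group*:
`G` is Hausdorff, `dom ⊆ G × G` is open, inversion is continuous, multiplication is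
continuous on `dom`, and the identity, inverse and (local) associativity axioms hold.
(Here `mul` is a total function, but its values outside `dom` are irrelevant:
all axioms refer only to products taken inside `dom`.) -/
structure IsLocalGroup [TopologicalSpace G] (one : G) (inv : G → G)
    (dom : Set (G × G)) (mul : G → G → G) : Prop where
  t2 : T2Space G
  isOpen_dom : IsOpen dom
  continuous_inv : Continuous inv
  continuousOn_mul : ContinuousOn (fun p : G × G => mul p.1 p.2) dom
  mem_one_left : ∀ x : G, (one, x) ∈ dom
  mem_one_right : ∀ x : G, (x, one) ∈ dom
  one_mul : ∀ x : G, mul one x = x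
  mul_one : ∀ x : G, mul x one = x
  mem_inv_left : ∀ x : G, (inv x, x) ∈ dom
  mem_inv_right : ∀ x : G, (x, inv x) ∈ dom
  inv_mul : ∀ x : G, mul (inv x) x = one
  mul_inv : ∀ x : G, mul x (inv x) = one
  assoc : ∀ x y z : G, (x, y) ∈ dom → (y, z) ∈ dom →
    ((mul x y, z) ∈ dom ∨ (x, mul y z) ∈ dom) →
    (mul x y, z) ∈ dom ∧ (x, mul y z) ∈ dom ∧ mul (mul x y) z = mul x (mul y z)

/-- `abc` is defined: `(a,b) ∈ Ω`, `(b,c) ∈ Ω` and `(ab,c) ∈ Ω`. -/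
def TripleDefined (dom : Set (G × G)) (mul : G → G → G) (a b c : G) : Prop :=
  (a, b) ∈ dom ∧ (b, c) ∈ dom ∧ (mul a b, c) ∈ dom

/-- A *subgroup* of the local group: a symmetric subset `H` with `1 ∈ H`,
`H × H ⊆ Ω` and `xy ∈ H` for all `x, y ∈ H`. -/
def IsLGSubgroup (one : G) (inv : G → G) (dom : Set (G × G)) (mul : G → G → G)
    (H : Set G) : Prop :=
  IsSymmetricSet inv H ∧ one ∈ H ∧ ∀ x ∈ H, ∀ y ∈ H, (x, y) ∈ dom ∧ mul x y ∈ H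

/-- A *normal subgroup* of the local group: a subgroup `N` such that for all `x ∈ N`
and all `a ∈ G`, `a * x * a⁻¹` is defined and lies in `N`. -/
def IsLGNormalSubgroup (one : G) (inv : G → G) (dom : Set (G × G)) (mul : G → G → G)
    (N : Set G) : Prop :=
  IsLGSubgroup one inv dom mul N ∧
    ∀ x ∈ N, ∀ a : G, TripleDefined dom mul a x (inv a) ∧ mul (mul a x) (inv a) ∈ N

/-- A *morphism* of local groups: a continuous map `φ` such that whenever
`(x,y) ∈ Ω_G`, also `(φ x, φ y) ∈ Ω_{G'}` and `φ(xy) = φ(x)φ(y)`. -/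
def IsLGHom [TopologicalSpace G] [TopologicalSpace G'] (dom : Set (G × G))
    (mul : G → G → G) (dom' : Set (G' × G')) (mul' : G' → G' → G') (φ : G → G') : Prop :=
  Continuous φ ∧
    ∀ x y : G, (x, y) ∈ dom → (φ x, φ y) ∈ dom' ∧ φ (mul x y) = mul' (φ x) (φ y)

/-- A morphism is *strong* if `(φ x, φ y) ∈ Ω_{G'}` implies `(x, y) ∈ Ω_G`. -/
def IsStrong (dom : Set (G × G)) (dom' : Set (G' × G')) (φ : G → G') : Prop :=
  ∀ x y : G, (φ x, φ y) ∈ dom' → (x, y) ∈ dom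

/-- An *isomorphism* of local groups: a morphism with a two-sided inverse that is
also a morphism. -/
def IsLGIso [TopologicalSpace G] [TopologicalSpace G'] (dom : Set (G × G))
    (mul : G → G → G) (dom' : Set (G' × G')) (mul' : G' → G' → G') (φ : G → G') : Prop :=
  IsLGHom dom mul dom' mul' φ ∧
    ∃ ψ : G' → G, IsLGHom dom' mul' dom mul ψ ∧
      Function.LeftInverse ψ φ ∧ Function.RightInverse ψ φ

/-- A map `ι : G → G'` is *open onto its image* if the image of every open set
is open in the subspace `ι(G)` of `G'`. -/
def IsOpenOntoImage [TopologicalSpace G] [TopologicalSpace G'] (ι : G → G') : Prop :=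
  ∀ O : Set G, IsOpen O → ∃ O' : Set G', IsOpen O' ∧ O' ∩ Set.range ι = ι '' O

end LocalGroupBasics

section Restriction

variable {G : Type u}

/-- The identity of the restriction `G|U`. -/
def restrictOne (one : G) (U : Set G) (h : one ∈ U) : ↥U := ⟨one, h⟩

open Classical in
/-- The inversion of the restriction `G|U` (with an irrelevant junk value on
points whose inverse falls outside `U`; when `U` is symmetric this never happens). -/
noncomputable def restrictInv (inv : G → G) (U : Set G) : ↥U → ↥U := fun x =>
  if h : inv ↑x ∈ U then ⟨inv ↑x, h⟩ else x

/-- The domain `Ω_U = {(x,y) ∈ Ω ∩ (U × U) : xy ∈ U}` of the restriction `G|U`. -/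
def restrictDom (dom : Set (G × G)) (mul : G → G → G) (U : Set G) : Set (↥U × ↥U) :=
  {p | ((p.1 : G), (p.2 : G)) ∈ dom ∧ mul ↑p.1 ↑p.2 ∈ U}

open Classical in
/-- The product of the restriction `G|U` (with an irrelevant junk value outside
`Ω_U`). -/
noncomputable def restrictMul (mul : G → G → G) (U : Set G) : ↥U → ↥U → ↥U := fun x y =>
  if h : mul ↑x ↑y ∈ U then ⟨mul ↑x ↑y, h⟩ else x

end Restriction

section Cosets

variable {G : Type u}

/-- The left coset `aN`. -/
def lCoset (mul : G → G → G) (N : Set G) (a : G) : Set G := {y | ∃ x ∈ N, y = mul a x}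

/-- The right coset `Na`. -/
def rCoset (mul : G → G → G) (N : Set G) (a : G) : Set G := {y | ∃ x ∈ N, y = mul x a}

/-- The underlying set `{aN : a ∈ G}` of the quotient `G/N`. -/
def Cosets (mul : G → G → G) (N : Set G) : Type u :=
  {A : Set G // ∃ a : G, A = lCoset mul N a}

/-- The canonical map `π : G → G/N`, `π(a) = aN`. -/
def cosetMap (mul : G → G → G) (N : Set G) (a : G) : Cosets mul N :=
  ⟨lCoset mul N a, a, rfl⟩

/-- The quotient topology on `G/N`. -/
def cosetTop [t : TopologicalSpace G] (mul : G → G → G) (N : Set G) :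
    TopologicalSpace (Cosets mul N) :=
  t.coinduced (cosetMap mul N)

/-- The domain `Ω_{G/N} = {(aN, bN) : (a,b) ∈ Ω}` of the quotient `G/N`. -/
def cosetDom (dom : Set (G × G)) (mul : G → G → G) (N : Set G) :
    Set (Cosets mul N × Cosets mul N) :=
  {p | ∃ a b : G, (a, b) ∈ dom ∧ p = (cosetMap mul N a, cosetMap mul N b)}

end Cosets

section NSS

/-- A local group has *no small subgroups* (NSS) if some neighborhood of the
identity contains no subgroup other than `{1}`. (The topology is an explicit
argument, so that this can be applied to quotient topologies.) -/
def HasNSS {G : Type u} (t : TopologicalSpace G) (one : G) (inv : G → G)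
    (dom : Set (G × G)) (mul : G → G → G) : Prop :=
  ∃ W ∈ @nhds G t one, ∀ K : Set G, IsLGSubgroup one inv dom mul K → K ⊆ W → K = {one}

end NSS

section TopGroup

/-- `H`, with a given group structure and topology, is a topological group whose
operations are compatible with the ambient local group data on `G ⊇ H`. -/
def GroupStructureCompatible {G : Type u} [TopologicalSpace G] (one : G) (inv : G → G)
    (mul : G → G → G) (H : Set G) [Group ↥H] : Prop :=
  (((1 : ↥H) : G) = one) ∧ (∀ a b : ↥H, ((a * b : ↥H) : G) = mul ↑a ↑b) ∧
    (∀ a : ↥H, ((a⁻¹ : ↥H) : G) = inv ↑a) ∧ IsTopologicalGroup ↥H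

/-- The restriction `G|U` is isomorphic, as a local group, to the restriction `H|V`
of the (Hausdorff) topological group `H` to some symmetric open neighborhood `V` of
its identity. -/
def IsoToGroupRestriction {G : Type u} [TopologicalSpace G]
    (dom : Set (G × G)) (mul : G → G → G) (U : Set G)
    (H : Type u) [TopologicalSpace H] [Group H] : Prop :=
  IsTopologicalGroup H ∧ T2Space H ∧
    ∃ V : Set H, IsOpen V ∧ (1 : H) ∈ V ∧ IsSymmetricSet (fun h => h⁻¹) V ∧
      ∃ φ : ↥U → ↥V,
        IsLGIso (restrictDom dom mul U) (restrictMul mul U)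
          (restrictDom Set.univ (fun a b : H => a * b) V)
          (restrictMul (fun a b : H => a * b) V) φ

/-- The local group `(G, one, inv, dom, mul)` is *locally isomorphic to a
topological group*: some restriction of it is isomorphic, as a local group, to a
restriction of a (Hausdorff) topological group. -/
def LocallyIsoToTopGroup {G : Type u} [TopologicalSpace G] (one : G) (inv : G → G)
    (dom : Set (G × G)) (mul : G → G → G) : Prop :=
  ∃ U : Set G, IsOpen U ∧ one ∈ U ∧ IsSymmetricSet inv U ∧
    ∃ (H : Type u) (tH : TopologicalSpace H) (gH : Group H),
      @IsoToGroupRestriction G _ dom mul U H tH gH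

end TopGroup

/-! By compactness of `N` (a tube lemma argument) the set `A` of `a ∈ V` such that
`a x a⁻¹` is defined and lies in `V` for every `x ∈ N` is an open neighbourhood of `N`.
Inside it, `T = {a | x a y is defined and lies in A for all x, y ∈ N}` is again an open
neighbourhood of `N`, now stable under two-sided translation by `N`, and `U = T ∩ T⁻¹` is
moreover symmetric. For `a ∈ U` and `x ∈ N` the products `a x`, `x a⁻¹` then stay in `U`,
and `a x a⁻¹ ∈ V` lies in `N` because `V` normalizes `N`. -/

theorem IsCompact.isOpen_setOf_forall_mem {X Y : Type*} [TopologicalSpace X]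
    [TopologicalSpace Y] {K : Set Y} (hK : IsCompact K) {W : Set (X × Y)} (hW : IsOpen W) :
    IsOpen {x | ∀ y ∈ K, (x, y) ∈ W} :=
  isOpen_iff_mem_nhds.2 fun _ hx =>
    hK.eventually_forall_of_forall_eventually fun y hy => hW.mem_nhds (hx y hy)

namespace IsLocalGroup

variable {G : Type u} [TopologicalSpace G] {one : G} {inv : G → G}
  {dom : Set (G × G)} {mul : G → G → G}

theorem eq_inv_of_mul_eq_one (hG : IsLocalGroup one inv dom mul) {a b : G}
    (hab : (a, b) ∈ dom) (h : mul a b = one) : b = inv a := by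
  obtain ⟨-, -, h_assoc⟩ := hG.assoc (inv a) a b (hG.mem_inv_left a) hab
    (Or.inl (by rw [hG.inv_mul]; exact hG.mem_one_left b))
  rwa [hG.inv_mul, hG.one_mul, h, hG.mul_one] at h_assoc

theorem inv_inv (hG : IsLocalGroup one inv dom mul) (a : G) : inv (inv a) = a :=
  (hG.eq_inv_of_mul_eq_one (hG.mem_inv_left a) (hG.inv_mul a)).symm

theorem mul_inv_rev (hG : IsLocalGroup one inv dom mul) {a b : G}
    (hab : (a, b) ∈ dom) (hba : (inv b, inv a) ∈ dom) :
    inv (mul a b) = mul (inv b) (inv a) := by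
  obtain ⟨hab_b, -, h_ab_b⟩ := hG.assoc a b (inv b) hab (hG.mem_inv_right b)
    (Or.inr (by rw [hG.mul_inv]; exact hG.mem_one_right a))
  have h_cancel : mul (mul a b) (inv b) = a := by rw [h_ab_b, hG.mul_inv, hG.mul_one]
  obtain ⟨-, hdom, h_assoc⟩ := hG.assoc (mul a b) (inv b) (inv a) hab_b hba
    (Or.inl (by rw [h_cancel]; exact hG.mem_inv_right a))
  refine (hG.eq_inv_of_mul_eq_one hdom ?_).symm
  rw [← h_assoc, h_cancel, hG.mul_inv]

theorem isOpen_setOf_tripleDefined (hG : IsLocalGroup one inv dom mul) {X : Type*}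
    [TopologicalSpace X] {f g h : X → G} (hf : Continuous f) (hg : Continuous g)
    (hh : Continuous h) {O : Set G} (hO : IsOpen O) :
    IsOpen {x | TripleDefined dom mul (f x) (g x) (h x) ∧ mul (mul (f x) (g x)) (h x) ∈ O} := by
  have hfg : ContinuousOn (fun x => mul (f x) (g x)) {x | (f x, g x) ∈ dom} :=
    hG.continuousOn_mul.comp (hf.prodMk hg).continuousOn fun _ hx => hx
  have hfg_h := (hfg.prodMk hh.continuousOn).isOpen_inter_preimage
    (hG.isOpen_dom.preimage (hf.prodMk hg)) hG.isOpen_dom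
  have hfgh : ContinuousOn (fun x => mul (mul (f x) (g x)) (h x))
      ({x | (f x, g x) ∈ dom} ∩ {x | (mul (f x) (g x), h x) ∈ dom}) :=
    hG.continuousOn_mul.comp ((hfg.prodMk hh.continuousOn).mono Set.inter_subset_left)
      fun _ hx => hx.2
  convert (hfgh.isOpen_inter_preimage hfg_h hO).inter
    (hG.isOpen_dom.preimage (hg.prodMk hh)) using 1
  ext x
  simp only [TripleDefined, Set.mem_inter_iff, Set.mem_preimage, Set.mem_ofPred_eq]
  tauto

end IsLocalGroup

section Subgroup

variable {G : Type u} {one : G} {inv : G → G} {dom : Set (G × G)} {mul : G → G → G}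
  {N : Set G}

theorem coe_restrictInv {U : Set G} {x : ↥U} (h : inv x ∈ U) :
    (restrictInv inv U x : G) = inv x := by
  simp only [restrictInv, dif_pos h]

theorem coe_restrictMul {U : Set G} {x y : ↥U} (h : mul x y ∈ U) :
    (restrictMul mul U x y : G) = mul x y := by
  simp only [restrictMul, dif_pos h]

theorem IsLGSubgroup.tripleDefined (hN : IsLGSubgroup one inv dom mul N) {a b c : G}
    (ha : a ∈ N) (hb : b ∈ N) (hc : c ∈ N) :
    TripleDefined dom mul a b c ∧ mul (mul a b) c ∈ N :=
  ⟨⟨(hN.2.2 a ha b hb).1, (hN.2.2 b hb c hc).1, (hN.2.2 _ (hN.2.2 a ha b hb).2 c hc).1⟩,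
    (hN.2.2 _ (hN.2.2 a ha b hb).2 c hc).2⟩

theorem IsLGSubgroup.restrict (hN : IsLGSubgroup one inv dom mul N) {U : Set G}
    (hUs : IsSymmetricSet inv U) (h1U : one ∈ U) (hNU : N ⊆ U) :
    IsLGSubgroup (restrictOne one U h1U) (restrictInv inv U) (restrictDom dom mul U)
      (restrictMul mul U) {x : ↥U | (x : G) ∈ N} := by
  refine ⟨fun x => ?_, hN.2.1, fun x hx y hy => ?_⟩
  · simp only [Set.mem_ofPred_eq, coe_restrictInv ((hUs x).1 x.2)]
    exact hN.1 x
  · have hxy := hN.2.2 x hx y hy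
    refine ⟨⟨hxy.1, hNU hxy.2⟩, ?_⟩
    simpa only [Set.mem_ofPred_eq, coe_restrictMul (hNU hxy.2)] using hxy.2

theorem IsLGSubgroup.isLGNormalSubgroup_restrict (hN : IsLGSubgroup one inv dom mul N)
    {U : Set G} (hUs : IsSymmetricSet inv U) (h1U : one ∈ U) (hNU : N ⊆ U)
    (hconj : ∀ a ∈ U, ∀ x ∈ N, TripleDefined dom mul a x (inv a) ∧ mul a x ∈ U ∧
      mul x (inv a) ∈ U ∧ mul (mul a x) (inv a) ∈ N) :
    IsLGNormalSubgroup (restrictOne one U h1U) (restrictInv inv U) (restrictDom dom mul U)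
      (restrictMul mul U) {x : ↥U | (x : G) ∈ N} := by
  refine ⟨hN.restrict hUs h1U hNU, fun x hx a => ?_⟩
  obtain ⟨⟨hax, hxa', haxa'⟩, hax_U, hxa'_U, haxa'_N⟩ := hconj a a.2 x hx
  have h_inv : (restrictInv inv U a : G) = inv a := coe_restrictInv ((hUs a).1 a.2)
  have h_ax : (restrictMul mul U a x : G) = mul a x := coe_restrictMul hax_U
  have h_axa' : (restrictMul mul U (restrictMul mul U a x) (restrictInv inv U a) : G) =
      mul (mul a x) (inv a) := by
    rw [coe_restrictMul (by rw [h_ax, h_inv]; exact hNU haxa'_N), h_ax, h_inv]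
  simp only [TripleDefined, restrictDom, Set.mem_ofPred_eq, h_inv, h_ax, h_axa']
  exact ⟨⟨⟨hax, hax_U⟩, ⟨hxa', hxa'_U⟩, ⟨haxa', hNU haxa'_N⟩⟩, haxa'_N⟩

end Subgroup

def IsTranslationStable {G : Type u} (dom : Set (G × G)) (mul : G → G → G) (N U : Set G) :
    Prop :=
  ∀ a ∈ U, ∀ z ∈ N, ((a, z) ∈ dom ∧ mul a z ∈ U) ∧ ((z, a) ∈ dom ∧ mul z a ∈ U)

section TranslationStable

variable {G : Type u} [TopologicalSpace G] {one : G} {inv : G → G}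
  {dom : Set (G × G)} {mul : G → G → G} {N : Set G}

theorem isTranslationStable_setOf_forall (hG : IsLocalGroup one inv dom mul)
    (hN : IsLGSubgroup one inv dom mul N) (O : Set G) :
    IsTranslationStable dom mul N
      {a | ∀ x ∈ N, ∀ y ∈ N, TripleDefined dom mul x a y ∧ mul (mul x a) y ∈ O} := by
  intro a ha z hz
  refine ⟨⟨(ha one hN.2.1 z hz).1.2.1, fun x hx y hy => ?_⟩,
    ⟨(ha z hz one hN.2.1).1.1, fun x hx y hy => ?_⟩⟩
  · obtain ⟨⟨hxa, haz, hxa_z⟩, -⟩ := ha x hx z hz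
    obtain ⟨⟨-, ha_zy, hxa_zy⟩, hxa_zy_O⟩ := ha x hx _ (hN.2.2 z hz y hy).2
    have hzy := (hN.2.2 z hz y hy).1
    obtain ⟨-, hx_az, h_x_az⟩ := hG.assoc x a z hxa haz (Or.inl hxa_z)
    obtain ⟨haz_y, -, -⟩ := hG.assoc a z y haz hzy (Or.inr ha_zy)
    obtain ⟨hxaz_y, -, h_xaz_y⟩ := hG.assoc (mul x a) z y hxa_z hzy (Or.inr hxa_zy)
    unfold TripleDefined
    rw [← h_x_az]
    exact ⟨⟨hx_az, haz_y, hxaz_y⟩, h_xaz_y ▸ hxa_zy_O⟩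
  · have hxz := hN.2.2 x hx z hz
    obtain ⟨⟨hxz_a, -, hxza_y⟩, hxza_y_O⟩ := ha _ hxz.2 y hy
    obtain ⟨⟨hza, -, hza_y⟩, -⟩ := ha z hz y hy
    obtain ⟨-, hx_za, h_xz_a⟩ := hG.assoc x z a hxz.1 hza (Or.inl hxz_a)
    unfold TripleDefined
    rw [← h_xz_a]
    exact ⟨⟨hx_za, hza_y, hxza_y⟩, hxza_y_O⟩

theorem IsTranslationStable.inter_preimage_inv (hG : IsLocalGroup one inv dom mul)
    (hNs : IsSymmetricSet inv N) {T : Set G} (hT : IsTranslationStable dom mul N T) :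
    IsTranslationStable dom mul N (T ∩ inv ⁻¹' T) := by
  intro a ⟨haT, ha'T⟩ z hz
  have hz' : inv z ∈ N := (hNs z).1 hz
  obtain ⟨⟨haz, hazT⟩, hza, hzaT⟩ := hT a haT z hz
  obtain ⟨⟨ha'z', ha'z'T⟩, hz'a', hz'a'T⟩ := hT (inv a) ha'T (inv z) hz'
  refine ⟨⟨haz, hazT, ?_⟩, hza, hzaT, ?_⟩
  · rwa [Set.mem_preimage, hG.mul_inv_rev haz hz'a']
  · rwa [Set.mem_preimage, hG.mul_inv_rev hza ha'z']

theorem exists_isOpen_isSymmetricSet_isTranslationStable (hG : IsLocalGroup one inv dom mul)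
    (hN : IsLGSubgroup one inv dom mul N) (hNc : IsCompact N) {O : Set G} (hO : IsOpen O)
    (hNO : N ⊆ O) :
    ∃ U, IsOpen U ∧ IsSymmetricSet inv U ∧ N ⊆ U ∧ U ⊆ O ∧
      IsTranslationStable dom mul N U := by
  set T := {a | ∀ x ∈ N, ∀ y ∈ N, TripleDefined dom mul x a y ∧ mul (mul x a) y ∈ O}
  have hTo : IsOpen T := by
    have := (hNc.prod hNc).isOpen_setOf_forall_mem <| hG.isOpen_setOf_tripleDefined
      (continuous_fst.comp continuous_snd) continuous_fst (continuous_snd.comp continuous_snd) hO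
    simpa only [Set.forall_prod_set, Set.mem_ofPred_eq, Function.comp_apply] using this
  have hNT : N ⊆ T := fun a ha x hx y hy =>
    (hN.tripleDefined hx ha hy).imp_right fun h => hNO h
  have hTO : T ⊆ O := fun a ha => by
    simpa only [hG.one_mul, hG.mul_one] using (ha one hN.2.1 one hN.2.1).2
  refine ⟨T ∩ inv ⁻¹' T, hTo.inter (hTo.preimage hG.continuous_inv), fun a => ?_,
    fun a ha => ⟨hNT ha, hNT ((hN.1 a).1 ha)⟩, fun a ha => hTO ha.1,
    (isTranslationStable_setOf_forall hG hN O).inter_preimage_inv hG hN.1⟩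
  simp only [Set.mem_inter_iff, Set.mem_preimage, hG.inv_inv]
  exact and_comm

end TranslationStable

theorem normal_in_restriction_of_normalizing_nbhd_general
    {G : Type u} [TopologicalSpace G] (one : G) (inv : G → G)
    (dom : Set (G × G)) (mul : G → G → G)
    (hG : IsLocalGroup one inv dom mul)
    (N V : Set G)
    (hNsub : IsLGSubgroup one inv dom mul N) (hNcpt : IsCompact N)
    (hVo : IsOpen V) (hNV : N ⊆ V)
    (hnorm : ∀ a ∈ V, ∀ x ∈ N, TripleDefined dom mul a x (inv a) →
      mul (mul a x) (inv a) ∈ V → mul (mul a x) (inv a) ∈ N) :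
    ∃ (U : Set G) (hUo : IsOpen U) (hUs : IsSymmetricSet inv U) (h1U : one ∈ U),
      N ⊆ U ∧ U ⊆ V ∧
      IsLGNormalSubgroup (restrictOne one U h1U) (restrictInv inv U)
        (restrictDom dom mul U) (restrictMul mul U) {x : ↥U | (x : G) ∈ N} := by
  set A := V ∩ {a | ∀ x ∈ N, TripleDefined dom mul a x (inv a) ∧ mul (mul a x) (inv a) ∈ V}
  have hAo : IsOpen A := hVo.inter <| hNcpt.isOpen_setOf_forall_mem <|
    hG.isOpen_setOf_tripleDefined continuous_fst continuous_snd
      (hG.continuous_inv.comp continuous_fst) hVo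
  have hNA : N ⊆ A := fun a ha => ⟨hNV ha, fun x hx =>
    (hNsub.tripleDefined ha hx ((hNsub.1 a).1 ha)).imp_right fun h => hNV h⟩
  obtain ⟨U, hUo, hUs, hNU, hUA, hstab⟩ :=
    exists_isOpen_isSymmetricSet_isTranslationStable hG hNsub hNcpt hAo hNA
  refine ⟨U, hUo, hUs, hNU hNsub.2.1, hNU, fun a ha => (hUA ha).1,
    hNsub.isLGNormalSubgroup_restrict hUs _ hNU fun a ha x hx => ?_⟩
  obtain ⟨hdef, hconjV⟩ := (hUA ha).2 x hx
  exact ⟨hdef, (hstab a ha x hx).1.2, (hstab (inv a) ((hUs a).1 ha) x hx).2.2,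
    hnorm a (hUA ha).1 x hx hdef hconjV⟩

/-- Lemma 2.2. If `N` is a compact subgroup of a local group `G`
with normalizing neighborhood `V`, then there is a symmetric open neighborhood `U`
of `1` with `N ⊆ U ⊆ V` such that `N` is a normal subgroup of the restriction
`G|U`. -/
theorem normal_in_restriction_of_normalizing_nbhd
    {G : Type u} [TopologicalSpace G] (one : G) (inv : G → G)
    (dom : Set (G × G)) (mul : G → G → G)
    (hG : IsLocalGroup one inv dom mul)
    (N V : Set G)
    (hNsub : IsLGSubgroup one inv dom mul N) (hNcpt : IsCompact N)
    (hVo : IsOpen V) (h1V : one ∈ V) (hVs : IsSymmetricSet inv V) (hNV : N ⊆ V)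
    (hnorm : ∀ a ∈ V, ∀ x ∈ N, TripleDefined dom mul a x (inv a) →
      mul (mul a x) (inv a) ∈ V → mul (mul a x) (inv a) ∈ N) :
    ∃ (U : Set G) (hUo : IsOpen U) (hUs : IsSymmetricSet inv U) (h1U : one ∈ U),
      N ⊆ U ∧ U ⊆ V ∧
      IsLGNormalSubgroup (restrictOne one U h1U) (restrictInv inv U)
        (restrictDom dom mul U) (restrictMul mul U) {x : ↥U | (x : G) ∈ N} :=
  normal_in_restriction_of_normalizing_nbhd_general one inv dom mul hG N V hNsub hNcpt hVo hNV hnorm
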